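/- arXiv:1509.06194 — 2 statements merged into one kernel-verified Lean document; each statement's English description precedes it below -/
import Mathlib

section
/- Let β ∈ (1,2) and k ≥ 1. Then β > α_k if and only if (T_1^{k-1} ∘ T_0)(1/β) > 1/(β(β-1)), where α_k is the unique root in (1,2) of x^{k+1} - 2x^k + x - 1 = 0, T_0(x) = βx and T_1(x) = βx - 1. -/
/-!
Since `T0 β (1/β) = 1` and `T1 β` is the expansion by `β` about its fixed point `1/(β-1)`, the
inequality becomes, after clearing denominators, `0 < p β` with `p x = x^(k+1) - 2x^k + x - 1`.
For `x > 0`, `p x = x^k g x` with `g x = x - 2 + (x-1)/x^k`, and `g` is strictly increasing on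
`(0, ∞)` (its derivative is positive by Bernoulli's inequality). As `g α = 0`, the sign of `p β`
is the sign of `β - α`.
-/

def T0 (β x : ℝ) : ℝ := β * x
def T1 (β x : ℝ) : ℝ := β * x - 1

open Set

theorem T1_iterate {β : ℝ} (hβ : β ≠ 1) (n : ℕ) (x : ℝ) :
    (T1 β)^[n] x = β ^ n * (x - 1 / (β - 1)) + 1 / (β - 1) := by
  have hβ' : β - 1 ≠ 0 := sub_ne_zero.mpr hβ
  induction n with
  | zero => simp
  | succ n ih =>
    rw [Function.iterate_succ_apply', ih, T1]
    field_simp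
    ring

theorem pow_succ_add_self_sub_mul_sub_one_pos (k : ℕ) {x : ℝ} (hx : 0 < x) :
    0 < x ^ (k + 1) + x - k * (x - 1) := by
  have bernoulli := one_add_mul_le_pow (a := x - 1) (by linarith) (k + 1)
  rw [add_sub_cancel] at bernoulli
  push_cast at bernoulli
  linarith

theorem strictMonoOn_sub_two_add_sub_one_div_pow (k : ℕ) :
    StrictMonoOn (fun x : ℝ => x - 2 + (x - 1) / x ^ k) (Ioi 0) := by
  refine strictMonoOn_of_deriv_pos (convex_Ioi 0) ?_ fun x hx => ?_
  · exact (continuousOn_id.sub continuousOn_const).add <|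
      (continuousOn_id.sub continuousOn_const).div (continuousOn_pow k)
        fun x hx => pow_ne_zero k (ne_of_gt hx)
  rw [interior_Ioi, mem_Ioi] at hx
  have hd : HasDerivAt (fun x : ℝ => x - 2 + (x - 1) / x ^ k)
      (1 + (1 * x ^ k - (x - 1) * (k * x ^ (k - 1))) / (x ^ k) ^ 2) x :=
    ((hasDerivAt_id x).sub_const 2).add
      (((hasDerivAt_id x).sub_const 1).div (hasDerivAt_pow k x) (pow_ne_zero k hx.ne'))
  rw [hd.deriv]
  rcases k with _ | k
  · norm_num
  · have hderiv : 1 + (1 * x ^ (k + 1) - (x - 1) * (((k + 1 : ℕ) : ℝ) * x ^ (k + 1 - 1))) /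
        (x ^ (k + 1)) ^ 2 = x ^ k * (x ^ (k + 1 + 1) + x - ((k + 1 : ℕ) : ℝ) * (x - 1)) /
        (x ^ (k + 1)) ^ 2 := by
      field_simp
      push_cast
      ring
    rw [hderiv]
    exact div_pos (mul_pos (pow_pos hx k) (pow_succ_add_self_sub_mul_sub_one_pos (k + 1) hx))
      (by positivity)

theorem lt_iff_pos_of_isRoot {k : ℕ} {α β : ℝ} (hα : 0 < α) (hβ : 0 < β)
    (hroot : α ^ (k + 1) - 2 * α ^ k + α - 1 = 0) :
    α < β ↔ 0 < β ^ (k + 1) - 2 * β ^ k + β - 1 := by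
  have factor : ∀ x : ℝ, 0 < x →
      x ^ (k + 1) - 2 * x ^ k + x - 1 = x ^ k * (x - 2 + (x - 1) / x ^ k) := fun x hx => by
    field_simp
    ring
  have hgα : α - 2 + (α - 1) / α ^ k = 0 := by
    rw [factor α hα] at hroot
    exact (mul_eq_zero.mp hroot).resolve_left (pow_ne_zero k hα.ne')
  rw [factor β hβ, mul_pos_iff_of_pos_left (pow_pos hβ k), ← hgα]
  exact ((strictMonoOn_sub_two_add_sub_one_div_pow k).lt_iff_lt hα hβ).symm

theorem T1_iterate_T0_one_div_gt_iff {β : ℝ} (hβ : 1 < β) {k : ℕ} (hk : 1 ≤ k) :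
    (T1 β)^[k - 1] (T0 β (1 / β)) > 1 / (β * (β - 1)) ↔
      0 < β ^ (k + 1) - 2 * β ^ k + β - 1 := by
  have hβ0 : 0 < β := by linarith
  have hβ1 : 0 < β - 1 := by linarith
  obtain ⟨n, rfl⟩ := Nat.exists_eq_add_of_le' hk
  have hT0 : T0 β (1 / β) = 1 := by
    rw [T0]
    field_simp
  rw [hT0, T1_iterate hβ.ne', Nat.add_sub_cancel, gt_iff_lt, ← sub_pos]
  have key : β ^ n * (1 - 1 / (β - 1)) + 1 / (β - 1) - 1 / (β * (β - 1)) =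
      (β ^ (n + 1 + 1) - 2 * β ^ (n + 1) + β - 1) / (β * (β - 1)) := by
    field_simp
    ring
  rw [key, div_pos_iff_of_pos_right (mul_pos hβ0 hβ1)]

theorem gt_alpha_iff (β : ℝ) (hβ : β ∈ Set.Ioo (1:ℝ) 2) (k : ℕ) (hk : 1 ≤ k)
    (α : ℝ) (hα : α ∈ Set.Ioo (1:ℝ) 2) (hroot : α^(k+1) - 2*α^k + α - 1 = 0) :
    β > α ↔ (T1 β)^[k-1] (T0 β (1/β)) > 1/(β*(β-1)) := by
  rw [T1_iterate_T0_one_div_gt_iff hβ.1 hk]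
  exact lt_iff_pos_of_isRoot (by linarith [hα.1]) (by linarith [hβ.1]) hroot
end

section
/- Let β ∈ (1,2) and k ≥ 1. Then β ≤ η_k if and only if (T_1^k ∘ T_0)(1/β) ≤ 1/(2(β−1)), where η_k is the unique root in (1,2) of 2x^{k+1} − 4x^k + 1 = 0, T_0(x) = βx and T_1(x) = βx − 1. -/
open Set

theorem le_iff_le_of_strictAntiOn_of_strictMonoOn {α β : Type*} [LinearOrder α] [LinearOrder β]
    {f : α → β} {a c η x : α} (hanti : StrictAntiOn f (Icc a c)) (hmono : StrictMonoOn f (Ici c))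
    (ha : f a < f η) (haη : a ≤ η) (hax : a ≤ x) :
    f x ≤ f η ↔ x ≤ η := by
  have hcη : c ≤ η := by
    by_contra! hηc
    exact (hanti.antitoneOn ⟨le_rfl, haη.trans hηc.le⟩ ⟨haη, hηc.le⟩ haη).not_gt ha
  rcases le_or_gt x c with hxc | hcx
  · exact iff_of_true ((hanti.antitoneOn ⟨le_rfl, hax.trans hxc⟩ ⟨hax, hxc⟩ hax).trans ha.le)
      (hxc.trans hcη)
  · exact hmono.le_iff_le hcx.le hcη

theorem T0_one_div_self {β : ℝ} (hβ : β ≠ 0) : T0 β (1 / β) = 1 := by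
  rw [T0, mul_one_div_cancel hβ]

theorem sub_one_mul_iterate_T1_sub_one (β x : ℝ) (k : ℕ) :
    (β - 1) * (T1 β)^[k] x - 1 = β ^ k * ((β - 1) * x - 1) := by
  induction k with
  | zero => simp
  | succ k ih =>
    rw [Function.iterate_succ_apply', T1, pow_succ]
    linear_combination β * ih

theorem iterate_T1_one_le_iff {β : ℝ} (hβ : 1 < β) (k : ℕ) :
    (T1 β)^[k] 1 ≤ 1 / (2 * (β - 1)) ↔ 2 * β ^ (k + 1) - 4 * β ^ k + 1 ≤ 0 := by
  have hβ1 : 0 < 2 * (β - 1) := by linarith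
  have h : (T1 β)^[k] 1 * (2 * (β - 1)) = 2 * β ^ (k + 1) - 4 * β ^ k + 2 := by
    linear_combination 2 * sub_one_mul_iterate_T1_sub_one β 1 k
  rw [le_div_iff₀ hβ1, h]
  constructor <;> intro <;> linarith

def etaPoly (k : ℕ) (x : ℝ) : ℝ := 2 * x ^ (k + 1) - 4 * x ^ k + 1

theorem etaPoly_one (k : ℕ) : etaPoly k 1 = -1 := by
  norm_num [etaPoly]

theorem hasDerivAt_etaPoly (k : ℕ) (x : ℝ) :
    HasDerivAt (etaPoly k) (2 * (k + 1) * x ^ k - 4 * k * x ^ (k - 1)) x := by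
  have h := (((hasDerivAt_pow (k + 1) x).const_mul 2).sub
    ((hasDerivAt_pow k x).const_mul 4)).add_const 1
  exact h.congr_deriv (by push_cast; ring)

theorem mul_deriv_etaPoly (k : ℕ) (x : ℝ) :
    x * deriv (etaPoly k) x = 2 * x ^ k * ((k + 1) * x - 2 * k) := by
  rw [(hasDerivAt_etaPoly k x).deriv]
  rcases k with _ | k
  · simp [mul_comm]
  · simp only [Nat.add_sub_cancel, pow_succ]
    ring

theorem etaPoly_strictAntiOn (k : ℕ) :
    StrictAntiOn (etaPoly k) (Icc 0 (2 * k / (k + 1))) := by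
  refine strictAntiOn_of_deriv_neg (convex_Icc _ _)
    (fun x _ ↦ (hasDerivAt_etaPoly k x).continuousAt.continuousWithinAt) fun x hx ↦ ?_
  rw [interior_Icc] at hx
  obtain ⟨hx0, hxc⟩ := hx
  rw [lt_div_iff₀ (by positivity)] at hxc
  have h : x * deriv (etaPoly k) x < 0 := by
    rw [mul_deriv_etaPoly]; exact mul_neg_of_pos_of_neg (by positivity) (by linarith)
  exact neg_of_mul_neg_right h hx0.le

theorem etaPoly_strictMonoOn (k : ℕ) :
    StrictMonoOn (etaPoly k) (Ici (2 * k / (k + 1))) := by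
  refine strictMonoOn_of_deriv_pos (convex_Ici _)
    (fun x _ ↦ (hasDerivAt_etaPoly k x).continuousAt.continuousWithinAt) fun x hx ↦ ?_
  rw [interior_Ici, mem_Ioi] at hx
  have hx0 : 0 < x := lt_of_le_of_lt (by positivity) hx
  rw [div_lt_iff₀ (by positivity)] at hx
  have h : 0 < x * deriv (etaPoly k) x := by
    rw [mul_deriv_etaPoly]; exact mul_pos (by positivity) (by linarith)
  exact pos_of_mul_pos_right h hx0.le

theorem le_eta_iff_general (β : ℝ) (hβ : β ∈ Set.Ioo (1:ℝ) 2) (k : ℕ)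
    (η : ℝ) (hη : η ∈ Set.Ioo (1:ℝ) 2) (hroot : 2*η^(k+1) - 4*η^k + 1 = 0) :
    β ≤ η ↔ (T1 β)^[k] (T0 β (1/β)) ≤ 1/(2*(β-1)) := by
  have hη0 : etaPoly k η = 0 := hroot
  rw [T0_one_div_self (by linarith [hβ.1]), iterate_T1_one_le_iff hβ.1]
  refine (le_iff_le_of_strictAntiOn_of_strictMonoOn ((etaPoly_strictAntiOn k).mono ?_)
    (etaPoly_strictMonoOn k) ?_ hη.1.le hβ.1.le).symm.trans ?_
  · exact Icc_subset_Icc_left zero_le_one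
  · rw [etaPoly_one, hη0]; norm_num
  · rw [hη0]; rfl

theorem le_eta_iff (β : ℝ) (hβ : β ∈ Set.Ioo (1:ℝ) 2) (k : ℕ) (hk : 1 ≤ k)
    (η : ℝ) (hη : η ∈ Set.Ioo (1:ℝ) 2) (hroot : 2*η^(k+1) - 4*η^k + 1 = 0) :
    β ≤ η ↔ (T1 β)^[k] (T0 β (1/β)) ≤ 1/(2*(β-1)) :=
  le_eta_iff_general β hβ k η hη hroot
end
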